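/- Let A and B be finite-dimensional C*-algebras with faithful states φ_A and φ_B such that, with respect to the induced inner products, the multiplication maps satisfy m_A m_A* = (dim_ℂ A) · id_A and m_B m_B* = (dim_ℂ B) · id_B. If T : A → B is an algebra isomorphism such that T* T is a left A-module map (T* T(a b) = a · T* T(b) for all a, b ∈ A; equivalently, T is *-preserving), then T is unitary: ⟨T x, T y⟩ = ⟨x, y⟩ for all x, y ∈ A. In particular, φ_B ∘ T = φ_A. -/

import Mathlib

/-!
The Frobenius condition `m m* = n • id` (`n = dim A`) forces `φ` to be the normalised trace of
the left regular representation.  In a `φ`-orthonormal basis `u` it says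
`∑ k, u k * star (u k) = n • 1`.  For `M j k = φ (u j * u k)`, orthonormality reads
`∑ k, conj (M j k) * M k j = 1`, while `∑ j k, |M j k|² = φ (∑ k, u k * star (u k)) = n`;
so `‖M - Mᵀ‖² = 2n - 2n = 0`, `φ` is tracial, and
`Tr (L y) = ∑ k, φ (star (u k) * y * u k) = φ (y * ∑ k, u k * star (u k)) = n * φ y`.

As `Tr ∘ L` is invariant under algebra isomorphisms, `φ_B ∘ T = φ_A`.  The module property makes
`T* T` right multiplication by `c = T* T 1`, and `φ_A (z c) = φ_B (T z) = φ_A z` forces `c = 1`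
by faithfulness, i.e. `T* T = id`.
-/

open scoped TensorProduct ComplexOrder

/-- The linear functional `⟪a ⊗ b, ·⟫` on `A ⊗[ℂ] A` for the inner product
`⟪x, y⟫ = φ (star x * y)` induced by a positive functional `φ`. -/
noncomputable def frobPair {A : Type*} [Ring A] [StarRing A] [Algebra ℂ A]
    (φ : A →ₗ[ℂ] ℂ) (a b : A) : TensorProduct ℂ A A →ₗ[ℂ] ℂ :=
  TensorProduct.lift ((LinearMap.mul ℂ ℂ).compl₁₂
    (φ ∘ₗ LinearMap.mulLeft ℂ (star a)) (φ ∘ₗ LinearMap.mulLeft ℂ (star b)))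

theorem Matrix.isSymm_of_sum_star_mul_eq_card {ι : Type*} [Fintype ι] (M : Matrix ι ι ℂ)
    (hdiag : ∀ j, ∑ k, star (M j k) * M k j = 1)
    (hfrob : ∑ j, ∑ k, star (M j k) * M j k = Fintype.card ι) : M.IsSymm := by
  set D : ι → ι → ℂ := fun j k => M j k - M k j
  have hD : ∑ j, ∑ k, (Complex.normSq (D j k) : ℂ) = 0 := by
    have hfrob' : ∑ j, ∑ k, star (M k j) * M k j = Fintype.card ι := by
      rw [Finset.sum_comm, hfrob]
    have hdiag' : ∑ j, ∑ k, star (M k j) * M j k = Fintype.card ι := by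
      rw [Finset.sum_comm]
      simp only [hdiag, Finset.sum_const, Finset.card_univ, nsmul_eq_mul, mul_one]
    simp only [D, Complex.normSq_eq_conj_mul_self, ← Complex.star_def, star_sub, sub_mul, mul_sub,
      Finset.sum_sub_distrib, hfrob, hfrob', hdiag', hdiag, Finset.sum_const, Finset.card_univ,
      nsmul_eq_mul, mul_one, sub_self]
  have hD0 : ∀ j k, D j k = 0 := by
    have hre : ∑ p : ι × ι, Complex.normSq (D p.1 p.2) = 0 := by
      rw [Fintype.sum_prod_type]
      exact_mod_cast hD
    intro j k
    exact Complex.normSq_eq_zero.mp <| congrFun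
      ((Fintype.sum_eq_zero_iff_of_nonneg fun _ => Complex.normSq_nonneg _).mp hre) (j, k)
  ext j k
  exact sub_eq_zero.mp (hD0 k j)

namespace FaithfulState

variable {A : Type*} [Ring A] [StarRing A] [Algebra ℂ A] {φ : A →ₗ[ℂ] ℂ}

theorem conj_map_star_mul [StarModule ℂ A] (hpos : ∀ a : A, 0 ≤ φ (star a * a)) (x y : A) :
    starRingEnd ℂ (φ (star x * y)) = φ (star y * x) := by
  have him : ∀ c : ℂ, (φ (star (x + c • y) * (x + c • y))).im = 0 := fun c =>
    (Complex.nonneg_iff.mp (hpos _)).2.symm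
  have expand : ∀ c : ℂ, φ (star (x + c • y) * (x + c • y)) =
      φ (star x * x) + c * φ (star x * y) + starRingEnd ℂ c * φ (star y * x)
        + starRingEnd ℂ c * c * φ (star y * y) := fun c => by
    simp only [star_add, star_smul, add_mul, mul_add, smul_mul_assoc, mul_smul_comm,
      map_add, map_smul, smul_eq_mul, starRingEnd_apply]
    ring
  have h1 := him 1
  have h2 := him Complex.I
  have hx := him 0
  rw [expand] at h1 h2 hx
  have hy : (φ (star y * y)).im = 0 := (Complex.nonneg_iff.mp (hpos y)).2.symm
  simp only [map_one, map_zero, one_mul, mul_one, zero_mul, add_zero, Complex.conj_I, neg_mul,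
    Complex.I_mul_I, neg_neg, Complex.add_im, Complex.mul_im, Complex.neg_im,
    Complex.I_re, Complex.I_im] at h1 h2 hx
  apply Complex.ext <;> simp only [Complex.conj_re, Complex.conj_im] <;> nlinarith

theorem map_star [StarModule ℂ A] (hpos : ∀ a : A, 0 ≤ φ (star a * a)) (x : A) :
    φ (star x) = starRingEnd ℂ (φ x) := by
  simpa using (conj_map_star_mul hpos 1 x).symm

theorem exists_basis_repr_eq [StarModule ℂ A] [FiniteDimensional ℂ A]
    (hpos : ∀ a : A, 0 ≤ φ (star a * a)) (hfaith : ∀ a : A, φ (star a * a) = 0 → a = 0) :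
    ∃ u : Module.Basis (Fin (Module.finrank ℂ A)) ℂ A,
      ∀ x k, u.repr x k = φ (star (u k) * x) := by
  let core : InnerProductSpace.Core ℂ A :=
    { inner := fun x y => φ (star x * y)
      conj_inner_symm := fun x y => conj_map_star_mul hpos y x
      re_inner_nonneg := fun x => (Complex.nonneg_iff.mp (hpos x)).1
      add_left := fun x y z => by simp only [star_add, add_mul, map_add]
      smul_left := fun x y r => by
        simp only [star_smul, smul_mul_assoc, map_smul, smul_eq_mul, starRingEnd_apply]
      definite := hfaith }
  let _ : NormedAddCommGroup A := core.toNormedAddCommGroup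
  let _ : InnerProductSpace ℂ A := InnerProductSpace.ofCore core.toCore
  exact ⟨(stdOrthonormalBasis ℂ A).toBasis, fun x k => by
    rw [OrthonormalBasis.coe_toBasis_repr_apply, OrthonormalBasis.coe_toBasis,
      OrthonormalBasis.repr_apply_apply]
    rfl⟩

section Basis

variable {ι : Type*} {u : Module.Basis ι ℂ A}

theorem trace_eq_sum [Fintype ι] (hu : ∀ x k, u.repr x k = φ (star (u k) * x)) (f : A →ₗ[ℂ] A) :
    LinearMap.trace ℂ A f = ∑ k, φ (star (u k) * f (u k)) := by
  classical
  simp only [LinearMap.trace_eq_matrix_trace ℂ u, Matrix.trace, Matrix.diag_apply,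
    LinearMap.toMatrix_apply, hu]

theorem star_basis_eq_sum [StarModule ℂ A] [Fintype ι] (hpos : ∀ a : A, 0 ≤ φ (star a * a))
    (hu : ∀ x k, u.repr x k = φ (star (u k) * x)) (j : ι) :
    star (u j) = ∑ k, starRingEnd ℂ (φ (u j * u k)) • u k := by
  conv_lhs => rw [← u.sum_repr (star (u j))]
  simp only [hu, ← star_mul, map_star hpos]

theorem frobPair_basis_eq_repr (hu : ∀ x k, u.repr x k = φ (star (u k) * x))
    (k l : ι) (s : A ⊗[ℂ] A) :
    frobPair φ (u k) (u l) s = (u.tensorProduct u).repr s (k, l) := by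
  induction s using TensorProduct.induction_on with
  | zero => simp
  | tmul x y => simp [frobPair, hu, mul_comm]
  | add s t hs ht => simp [hs, ht]

theorem mul'_eq_sum_mul_star [StarModule ℂ A] [Fintype ι] (hpos : ∀ a : A, 0 ≤ φ (star a * a))
    (hu : ∀ x k, u.repr x k = φ (star (u k) * x)) (z : A ⊗[ℂ] A)
    (hz : ∀ a b : A, frobPair φ a b z = φ (star (a * b))) :
    LinearMap.mul' ℂ A z = ∑ k, u k * star (u k) := by
  conv_lhs => rw [← (u.tensorProduct u).sum_repr z]
  simp only [← frobPair_basis_eq_repr hu, hz, map_sum, map_smul, Fintype.sum_prod_type,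
    Module.Basis.tensorProduct_apply, LinearMap.mul'_apply, star_basis_eq_sum hpos hu,
    Finset.mul_sum, mul_smul_comm, map_star hpos]

theorem map_mul_comm [StarModule ℂ A] [Fintype ι] (hpos : ∀ a : A, 0 ≤ φ (star a * a))
    (hstate : φ 1 = 1) (hu : ∀ x k, u.repr x k = φ (star (u k) * x))
    (hsum : ∑ k, u k * star (u k) = (Fintype.card ι : ℂ) • 1) (x y : A) :
    φ (x * y) = φ (y * x) := by
  let M : Matrix ι ι ℂ := fun j k => φ (u j * u k)
  have hrow : ∀ j, φ (star (u j) * u j) = ∑ k, star (M j k) * M k j := fun j => by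
    simp [M, star_basis_eq_sum hpos hu j, Finset.sum_mul]
  have hcol : ∀ j, φ (u j * star (u j)) = ∑ k, star (M j k) * M j k := fun j => by
    simp [M, star_basis_eq_sum hpos hu j, Finset.mul_sum, mul_comm]
  have hM : M.IsSymm := by
    refine Matrix.isSymm_of_sum_star_mul_eq_card M (fun j => ?_) ?_
    · rw [← hrow, ← hu, u.repr_self, Finsupp.single_eq_same]
    · simp_rw [← hcol, ← map_sum, hsum, map_smul, hstate, smul_eq_mul, mul_one]
  have hbil : (LinearMap.mul ℂ A).compr₂ φ = (LinearMap.mul ℂ A).flip.compr₂ φ :=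
    LinearMap.ext_basis u u fun j k => hM.apply k j
  exact congr($hbil x y)

end Basis

theorem trace_mulLeft_eq_finrank_mul [StarModule ℂ A] [FiniteDimensional ℂ A]
    (hpos : ∀ a : A, 0 ≤ φ (star a * a)) (hfaith : ∀ a : A, φ (star a * a) = 0 → a = 0)
    (hstate : φ 1 = 1) (z : A ⊗[ℂ] A) (hz : ∀ a b : A, frobPair φ a b z = φ (star (a * b)))
    (hQ : LinearMap.mul' ℂ A z = (Module.finrank ℂ A : ℂ) • 1) (y : A) :
    LinearMap.trace ℂ A (LinearMap.mulLeft ℂ y) = Module.finrank ℂ A * φ y := by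
  obtain ⟨u, hu⟩ := exists_basis_repr_eq hpos hfaith
  have hsum : ∑ k, u k * star (u k) = (Fintype.card (Fin (Module.finrank ℂ A)) : ℂ) • 1 := by
    rw [← mul'_eq_sum_mul_star hpos hu z hz, hQ, Fintype.card_fin]
  calc LinearMap.trace ℂ A (LinearMap.mulLeft ℂ y)
      = ∑ k, φ (star (u k) * (y * u k)) := trace_eq_sum hu _
    _ = ∑ k, φ (y * (u k * star (u k))) := by
        simp only [map_mul_comm hpos hstate hu hsum (star (u _)), mul_assoc]
    _ = Module.finrank ℂ A * φ y := by
        rw [← map_sum, ← Finset.mul_sum, hsum, Fintype.card_fin, mul_smul_comm, mul_one,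
          map_smul, smul_eq_mul]

theorem eq_one_of_map_mul_right_eq
    (hfaith : ∀ a : A, φ (star a * a) = 0 → a = 0) {c : A} (hc : ∀ z, φ (z * c) = φ z) :
    c = 1 := by
  refine sub_eq_zero.mp (hfaith _ ?_)
  rw [mul_sub, mul_one, map_sub, hc, sub_self]

end FaithfulState

theorem LinearMap.trace_mulLeft_algEquiv {R A B : Type*} [CommRing R] [Ring A] [Ring B]
    [Algebra R A] [Algebra R B] (e : A ≃ₐ[R] B) (x : A) :
    LinearMap.trace R B (LinearMap.mulLeft R (e x)) =
      LinearMap.trace R A (LinearMap.mulLeft R x) := by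
  rw [← LinearMap.trace_conj' (LinearMap.mulLeft R x) e.toLinearEquiv]
  congr 1
  ext b
  simp

theorem statement8 {A B : Type*}
    [NormedRing A] [StarRing A] [CStarRing A] [NormedAlgebra ℂ A] [StarModule ℂ A]
    [FiniteDimensional ℂ A]
    [NormedRing B] [StarRing B] [CStarRing B] [NormedAlgebra ℂ B] [StarModule ℂ B]
    [FiniteDimensional ℂ B]
    (φA : A →ₗ[ℂ] ℂ) (φB : B →ₗ[ℂ] ℂ)
    -- φ_A and φ_B are faithful states:
    (hposA : ∀ a : A, 0 ≤ φA (star a * a)) (hfaithA : ∀ a : A, φA (star a * a) = 0 → a = 0)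
    (hstateA : φA 1 = 1)
    (hposB : ∀ b : B, 0 ≤ φB (star b * b)) (hfaithB : ∀ b : B, φB (star b * b) = 0 → b = 0)
    (hstateB : φB 1 = 1)
    -- m_A m_A* = (dim A) · id:
    (mstarA : A → TensorProduct ℂ A A)
    (hadjA : ∀ a b y : A, frobPair φA a b (mstarA y) = φA (star (a * b) * y))
    (hQA : ∀ y : A, LinearMap.mul' ℂ A (mstarA y) = (Module.finrank ℂ A : ℂ) • y)
    -- m_B m_B* = (dim B) · id:
    (mstarB : B → TensorProduct ℂ B B)
    (hadjB : ∀ a b y : B, frobPair φB a b (mstarB y) = φB (star (a * b) * y))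
    (hQB : ∀ y : B, LinearMap.mul' ℂ B (mstarB y) = (Module.finrank ℂ B : ℂ) • y)
    -- T is an algebra isomorphism with adjoint T* = Ts, and T* T is a left A-module map:
    (T : A →ₗ[ℂ] B) (hTbij : Function.Bijective T)
    (hTmul : ∀ x y : A, T (x * y) = T x * T y)
    (Ts : B → A)
    (hTadj : ∀ (x : A) (y : B), φB (star (T x) * y) = φA (star x * Ts y))
    (hmod : ∀ a b : A, Ts (T (a * b)) = a * Ts (T b)) :
    -- T is unitary, and in particular φ_B ∘ T = φ_A:
    (∀ x y : A, φB (star (T x) * T y) = φA (star x * y)) ∧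
    (∀ x : A, φB (T x) = φA x) := by
  have hT1 : T 1 = 1 := by
    obtain ⟨a, ha⟩ := hTbij.2 1
    rw [← mul_one (T 1), ← ha, ← hTmul, one_mul]
  let e : A ≃ₐ[ℂ] B := AlgEquiv.ofBijective (AlgHom.ofLinearMap T hT1 hTmul) hTbij
  have hφ : ∀ x, φB (T x) = φA x := by
    intro x
    have : Nontrivial A := nontrivial_of_ne 1 0 fun h => by simp [h] at hstateA
    have hdim : (Module.finrank ℂ A : ℂ) ≠ 0 := Nat.cast_ne_zero.mpr Module.finrank_pos.ne'
    refine mul_left_cancel₀ hdim ?_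
    rw [← FaithfulState.trace_mulLeft_eq_finrank_mul hposA hfaithA hstateA _
        (fun a b => by simpa using hadjA a b 1) (hQA 1),
      ← LinearMap.trace_mulLeft_algEquiv e, e.toLinearEquiv.finrank_eq,
      FaithfulState.trace_mulLeft_eq_finrank_mul hposB hfaithB hstateB _
        (fun a b => by simpa using hadjB a b 1) (hQB 1)]
    rfl
  have hTsT : Ts (T 1) = 1 := by
    refine FaithfulState.eq_one_of_map_mul_right_eq hfaithA fun z => ?_
    calc φA (z * Ts (T 1)) = φA (star 1 * Ts (T z)) := by rw [← hmod, mul_one, star_one, one_mul]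
      _ = φB (T z) := by rw [← hTadj, hT1, star_one, one_mul]
      _ = φA z := hφ z
  refine ⟨fun x y => ?_, hφ⟩
  rw [hTadj, ← mul_one y, hmod, hTsT, mul_one]
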